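/- Let V : ℂ^{d_A} → ℂ^{M} be an isometry (V†V = 1_A), {|z⟩}_{z=1}^{M} an orthonormal basis of ℂ^{M}, and ρ_A a density matrix on ℂ^{d_A} with D(ρ_A, 1_A/d_A) ≤ δ. Define p_z := ⟨z|V ρ_A V†|z⟩ and r_z := (1/d_A)⟨z|V V†|z⟩. Then |p_z − r_z| ≤ 2 δ d_A r_z for every z, and consequently D(p⃗, r⃗) ≤ δ d_A. -/

import Mathlib

/- Common definitions: trace norm, trace distance, Kronecker powers, outer products,
post-measurement ensembles, row ensembles of isometries, and Haar moment operators. -/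

open scoped BigOperators ComplexConjugate ComplexOrder
open MeasureTheory Matrix

noncomputable section

instance {m n : Type*} : MeasurableSpace (Matrix m n ℂ) := borel _
instance {m n : Type*} : BorelSpace (Matrix m n ℂ) := ⟨rfl⟩

/-- The trace norm (Schatten 1-norm) `‖A‖₁ = Tr[√(AᴴA)]`. -/
def traceNorm {n : Type*} [Fintype n] [DecidableEq n] (A : Matrix n n ℂ) : ℝ :=
  (((Matrix.posSemidef_conjTranspose_mul_self A).1.eigenvectorUnitary.1 *
    diagonal (fun i => ((Real.sqrt ((Matrix.posSemidef_conjTranspose_mul_self A).1.eigenvalues i) : ℝ) : ℂ)) *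
    (star (Matrix.posSemidef_conjTranspose_mul_self A).1.eigenvectorUnitary : Matrix n n ℂ)).trace).re

/-- The trace distance `D(A,B) = ‖A - B‖₁ / 2`. -/
def traceDist {n : Type*} [Fintype n] [DecidableEq n] (A B : Matrix n n ℂ) : ℝ :=
  traceNorm (A - B) / 2

/-- The Hilbert-Schmidt (Frobenius) norm `‖A‖₂ = √(Tr[AᴴA])`. -/
def hsNorm {m n : Type*} [Fintype m] [Fintype n] (A : Matrix m n ℂ) : ℝ :=
  Real.sqrt ((Aᴴ * A).trace).re

/-- The `k`-fold tensor (Kronecker) power of a matrix on `ℂ^d`,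
as an operator on `(ℂ^d)^{⊗ k}`. -/
def tpow {d : ℕ} (ρ : Matrix (Fin d) (Fin d) ℂ) (k : ℕ) :
    Matrix (Fin k → Fin d) (Fin k → Fin d) ℂ :=
  Matrix.of fun x y => ∏ i, ρ (x i) (y i)

/-- The tensor product `ρ^{⊗ l} ⊗ A ⊗ ρ^{⊗ (k - (l+1))}` on `(ℂ^d)^{⊗ k}`,
with `A` inserted at position `l`. -/
def tpowIns {d : ℕ} (ρ A : Matrix (Fin d) (Fin d) ℂ) (k l : ℕ) :
    Matrix (Fin k → Fin d) (Fin k → Fin d) ℂ :=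
  Matrix.of fun x y => ∏ i : Fin k, if (i : ℕ) = l then A (x i) (y i) else ρ (x i) (y i)

/-- The outer product (rank-one projection for a unit vector) `|v⟩⟨v|`. -/
def outer {d : ℕ} (v : Fin d → ℂ) : Matrix (Fin d) (Fin d) ℂ :=
  Matrix.of fun i j => v i * star (v j)

/-- Squared Euclidean norm of a vector in `ℂ^d`. -/
def nsq {d : ℕ} (v : Fin d → ℂ) : ℝ := ∑ i, Complex.normSq (v i)

/-- Euclidean norm of a vector in `ℂ^d`. -/
def l2norm {d : ℕ} (v : Fin d → ℂ) : ℝ := Real.sqrt (nsq v)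

/-- The normalization `v / ‖v‖` of a vector. -/
def normalizeVec {d : ℕ} (v : Fin d → ℂ) : Fin d → ℂ :=
  fun i => v i / (Real.sqrt (nsq v) : ℂ)

/-- For an unnormalized vector `v` with weight `p = ‖v‖²`, the contribution
`p (|v/‖v‖⟩⟨v/‖v‖|)^{⊗ k}` to a `k`-th moment operator (zero when `v = 0`,
i.e. the ensemble member occurs with probability zero). -/
def momentTerm {d : ℕ} (v : Fin d → ℂ) (k : ℕ) :
    Matrix (Fin k → Fin d) (Fin k → Fin d) ℂ :=
  if v = 0 then 0 else ((nsq v : ℝ) : ℂ) • tpow (outer (normalizeVec v)) k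

/-- The `k`-th moment operator `∑_{z : v_z ≠ 0} p_z (|ψ_z⟩⟨ψ_z|)^{⊗ k}` of the row ensemble
induced by `V : ℂ^{d_A} → ℂ^M` with respect to the orthonormal basis `e` of `ℂ^M`:
`⟨v_z| := ⟨z|V`, `|ψ_z⟩ := |v_z⟩/‖v_z‖`, `p_z := ‖v_z‖²/d_A`. -/
def rowMoment {dA M : ℕ} (V : Matrix (Fin M) (Fin dA) ℂ) (e : Fin M → Fin M → ℂ) (k : ℕ) :
    Matrix (Fin k → Fin dA) (Fin k → Fin dA) ℂ :=
  ((dA : ℂ))⁻¹ • ∑ z, momentTerm (fun j => star (Matrix.vecMul (star (e z)) V j)) k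

/-- The `k`-th moment operator `∑_{z : p_z > 0} p_z (|ψ_z⟩⟨ψ_z|)^{⊗ k}` of the
post-measurement ensemble of the pure state `Ψ ∈ ℂ^{d_A} ⊗ ℂ^M` measured on the second
factor in the orthonormal basis `b`: `p_z := ⟨Ψ|(1 ⊗ |b_z⟩⟨b_z|)|Ψ⟩` and
`|ψ_z⟩ := (1 ⊗ ⟨b_z|)|Ψ⟩ / √p_z`. -/
def postMoment {dA M : ℕ} (Ψ : Fin dA × Fin M → ℂ) (b : Fin M → (Fin M → ℂ)) (k : ℕ) :
    Matrix (Fin k → Fin dA) (Fin k → Fin dA) ℂ :=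
  ∑ z, momentTerm (fun i => dotProduct (star (b z)) (fun w => Ψ (i, w))) k

/-- The `k`-th Haar moment operator `∫ (U|e₁⟩⟨e₁|Uᴴ)^{⊗ k} dU` on `(ℂ^d)^{⊗ k}`,
where `ν` is the (normalized) Haar measure on the unitary group `U(d)`. -/
def haarMoment {d : ℕ} [NeZero d] (ν : Measure (Matrix.unitaryGroup (Fin d) ℂ)) (k : ℕ) :
    Matrix (Fin k → Fin d) (Fin k → Fin d) ℂ :=
  Matrix.of fun x y =>
    ∫ U, (∏ i, ((U : Matrix (Fin d) (Fin d) ℂ) (x i) 0 *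
      star ((U : Matrix (Fin d) (Fin d) ℂ) (y i) 0))) ∂ν

lemma traceNorm_herm {n : Type*} [Fintype n] [DecidableEq n]
    {A : Matrix n n ℂ} (hA : A.IsHermitian) :
    traceNorm A = ∑ i, |hA.eigenvalues i| := by
  set U : Matrix n n ℂ := (hA.eigenvectorUnitary : Matrix n n ℂ) with hU
  have hUU : U * star U = 1 := (Matrix.mem_unitaryGroup_iff).mp hA.eigenvectorUnitary.2
  have hUU' : star U * U = 1 := mul_eq_one_comm.mp hUU
  set d : n → ℂ := fun i => Complex.ofReal |hA.eigenvalues i| with hd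
  set S : Matrix n n ℂ := U * Matrix.diagonal d * star U with hS
  have hdiagPSD : (Matrix.diagonal d).PosSemidef := by
    rw [Matrix.posSemidef_diagonal_iff]
    intro i
    rw [hd, Complex.zero_le_real]
    exact abs_nonneg _
  have hSpsd : S.PosSemidef := by
    have := hdiagPSD.mul_mul_conjTranspose_same U
    rw [← Matrix.star_eq_conjTranspose] at this
    exact this
  have hdd : Matrix.diagonal d * Matrix.diagonal d
      = Matrix.diagonal (RCLike.ofReal ∘ hA.eigenvalues) *
        Matrix.diagonal (RCLike.ofReal ∘ hA.eigenvalues) := by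
    rw [Matrix.diagonal_mul_diagonal, Matrix.diagonal_mul_diagonal]
    refine congrArg _ (funext fun i => ?_)
    show Complex.ofReal |hA.eigenvalues i| * Complex.ofReal |hA.eigenvalues i|
        = (RCLike.ofReal ∘ hA.eigenvalues) i * (RCLike.ofReal ∘ hA.eigenvalues) i
    simp only [Function.comp, RCLike.ofReal]
    rw [← Complex.ofReal_mul, abs_mul_abs_self, Complex.ofReal_mul]
    rfl
  have hsq : S ^ 2 = Aᴴ * A := by
    rw [hA.eq, pow_two, hS]
    conv_rhs => rw [hA.spectral_theorem, Unitary.conjStarAlgAut_apply, ← hU]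
    calc U * Matrix.diagonal d * star U * (U * Matrix.diagonal d * star U)
        = U * (Matrix.diagonal d * (star U * U) * Matrix.diagonal d) * star U := by
          simp only [Matrix.mul_assoc]
      _ = U * (Matrix.diagonal d * Matrix.diagonal d) * star U := by
          rw [hUU', Matrix.mul_one]
      _ = U * (Matrix.diagonal (RCLike.ofReal ∘ hA.eigenvalues) *
            Matrix.diagonal (RCLike.ofReal ∘ hA.eigenvalues)) * star U := by rw [hdd]
      _ = U * (Matrix.diagonal (RCLike.ofReal ∘ hA.eigenvalues) * (star U * U) *
            Matrix.diagonal (RCLike.ofReal ∘ hA.eigenvalues)) * star U := by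
          rw [hUU', Matrix.mul_one]
      _ = _ := by simp only [Matrix.mul_assoc]
  have hsqrt : ((Matrix.posSemidef_conjTranspose_mul_self A).1.eigenvectorUnitary.1 *
      diagonal (fun i => ((Real.sqrt ((Matrix.posSemidef_conjTranspose_mul_self A).1.eigenvalues i) : ℝ) : ℂ)) *
      (star (Matrix.posSemidef_conjTranspose_mul_self A).1.eigenvectorUnitary : Matrix n n ℂ)) = S := by
    open scoped MatrixOrder in
    have h2 : CFC.sqrt (Aᴴ * A) = S :=
      (CFC.sqrt_eq_iff _ _ (Matrix.posSemidef_conjTranspose_mul_self A).nonneg hSpsd.nonneg).mpr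
        (by rw [← pow_two, hsq])
    open scoped MatrixOrder in
    have h3 : CFC.sqrt (Aᴴ * A) = (Matrix.posSemidef_conjTranspose_mul_self A).1.cfc Real.sqrt := by
      rw [CFC.sqrt_eq_real_sqrt _ (Matrix.posSemidef_conjTranspose_mul_self A).nonneg, cfcₙ_eq_cfc,
        (Matrix.posSemidef_conjTranspose_mul_self A).1.cfc_eq]
    rw [h2, IsHermitian.cfc, Unitary.conjStarAlgAut_apply] at h3
    exact h3.symm
  rw [traceNorm, hsqrt, hS, Matrix.trace_mul_cycle, hUU', Matrix.one_mul,
    Matrix.trace_diagonal, Complex.re_sum]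
  simp [hd]

lemma quad_bound {n : Type*} [Fintype n] [DecidableEq n]
    {A : Matrix n n ℂ} (hA : A.IsHermitian) (u : n → ℂ) :
    |(dotProduct (star u) (A.mulVec u)).re|
      ≤ (∑ i, |hA.eigenvalues i|) * (dotProduct (star u) u).re := by
  set U : Matrix n n ℂ := (hA.eigenvectorUnitary : Matrix n n ℂ) with hU
  have hUU : U * star U = 1 := (Matrix.mem_unitaryGroup_iff).mp hA.eigenvectorUnitary.2
  set w : n → ℂ := (star U) *ᵥ u with hw
  have hsw : star w = star u ᵥ* U := by
    rw [hw, Matrix.star_mulVec, Matrix.star_eq_conjTranspose, Matrix.conjTranspose_conjTranspose]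
  have hcm : ∀ z : ℂ, star z * z = (Complex.normSq z : ℂ) := by
    intro z
    rw [Complex.star_def, Complex.normSq_eq_conj_mul_self]
  have h1 : dotProduct (star u) (A.mulVec u)
      = ∑ i, (hA.eigenvalues i : ℂ) * (Complex.normSq (w i) : ℂ) := by
    conv_lhs => rw [hA.spectral_theorem, Unitary.conjStarAlgAut_apply, ← hU]
    rw [← Matrix.mulVec_mulVec, ← Matrix.mulVec_mulVec, Matrix.dotProduct_mulVec, ← hsw]
    simp only [dotProduct, Matrix.mulVec_diagonal, Pi.star_apply, Function.comp]
    refine Finset.sum_congr rfl fun i _ => ?_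
    rw [mul_comm ((RCLike.ofReal (hA.eigenvalues i) : ℂ)) (w i), ← mul_assoc, hcm, mul_comm]
    rfl
  have h2 : (dotProduct (star u) u).re = ∑ i, Complex.normSq (w i) := by
    have h0 : dotProduct (star w) w = dotProduct (star u) u := by
      rw [hsw, hw, Matrix.dotProduct_mulVec, Matrix.vecMul_vecMul, hUU, Matrix.vecMul_one]
    rw [← h0]
    simp only [dotProduct, Pi.star_apply]
    rw [Complex.re_sum]
    refine Finset.sum_congr rfl fun i _ => ?_
    rw [hcm]
    simp
  have h3 : (dotProduct (star u) (A.mulVec u)).re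
      = ∑ i, hA.eigenvalues i * Complex.normSq (w i) := by
    rw [h1, Complex.re_sum]
    refine Finset.sum_congr rfl fun i _ => ?_
    rw [← Complex.ofReal_mul]
    simp
  rw [h3, h2]
  calc |∑ i, hA.eigenvalues i * Complex.normSq (w i)|
      ≤ ∑ i, |hA.eigenvalues i * Complex.normSq (w i)| := Finset.abs_sum_le_sum_abs _ _
    _ ≤ ∑ i, |hA.eigenvalues i| * ∑ j, Complex.normSq (w j) := by
        refine Finset.sum_le_sum fun i _ => ?_
        rw [abs_mul, abs_of_nonneg (Complex.normSq_nonneg _)]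
        exact mul_le_mul_of_nonneg_left
          (Finset.single_le_sum (fun j _ => Complex.normSq_nonneg (w j)) (Finset.mem_univ i))
          (abs_nonneg _)
    _ = _ := by rw [← Finset.sum_mul]

/-- for an isometry `V : ℂ^{d_A} → ℂ^M`, an orthonormal basis `e` of `ℂ^M`
and a density matrix `ρ_A` with `D(ρ_A, 1/d_A) ≤ δ`, the probabilities
`p_z = ⟨z|V ρ_A V†|z⟩` and `r_z = ⟨z|V V†|z⟩ / d_A` satisfy `|p_z − r_z| ≤ 2 δ d_A r_z`
and `D(p⃗, r⃗) ≤ δ d_A`. -/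
theorem probabilities_close {dA M : ℕ} [NeZero dA]
    (V : Matrix (Fin M) (Fin dA) ℂ) (hV : Vᴴ * V = 1)
    (e : Fin M → Fin M → ℂ)
    (he : ∀ z w, dotProduct (star (e z)) (e w) = if z = w then 1 else 0)
    (ρA : Matrix (Fin dA) (Fin dA) ℂ) (hρ : ρA.PosSemidef) (hρtr : ρA.trace = 1)
    (δ : ℝ) (hδ : traceDist ρA ((dA : ℂ)⁻¹ • 1) ≤ δ) :
    (∀ z, |(dotProduct (star (e z)) ((V * ρA * Vᴴ).mulVec (e z))).re
            - (dA : ℝ)⁻¹ * (dotProduct (star (e z)) ((V * Vᴴ).mulVec (e z))).re|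
        ≤ 2 * δ * dA * ((dA : ℝ)⁻¹ * (dotProduct (star (e z)) ((V * Vᴴ).mulVec (e z))).re))
    ∧ (∑ z, |(dotProduct (star (e z)) ((V * ρA * Vᴴ).mulVec (e z))).re
            - (dA : ℝ)⁻¹ * (dotProduct (star (e z)) ((V * Vᴴ).mulVec (e z))).re|) / 2
        ≤ δ * dA := by
  classical
  have hdA0 : (dA : ℝ) ≠ 0 := Nat.cast_ne_zero.mpr (NeZero.ne dA)
  set Δ : Matrix (Fin dA) (Fin dA) ℂ := ρA - (dA : ℂ)⁻¹ • 1 with hΔdef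
  have hΔ : Δ.IsHermitian := by
    refine Matrix.IsHermitian.sub hρ.1 ?_
    simp [Matrix.IsHermitian, Matrix.conjTranspose_smul]
  have htn : traceNorm Δ ≤ 2 * δ := by
    unfold traceDist at hδ
    linarith
  have hsumev : ∑ i, |hΔ.eigenvalues i| ≤ 2 * δ := by
    rw [← traceNorm_herm hΔ]; exact htn
  have hev0 : (0:ℝ) ≤ ∑ i, |hΔ.eigenvalues i| :=
    Finset.sum_nonneg fun i _ => abs_nonneg _
  have hδ0 : 0 ≤ δ := by linarith
  set u : Fin M → Fin dA → ℂ := fun z => Vᴴ *ᵥ e z with hu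
  have key : ∀ (B : Matrix (Fin dA) (Fin dA) ℂ) (z : Fin M),
      dotProduct (star (e z)) ((V * B * Vᴴ) *ᵥ e z)
        = dotProduct (star (u z)) (B *ᵥ u z) := by
    intro B z
    rw [← Matrix.mulVec_mulVec, ← Matrix.mulVec_mulVec, Matrix.dotProduct_mulVec]
    congr 1
    rw [hu]
    rw [Matrix.star_mulVec, Matrix.conjTranspose_conjTranspose]
  have hqz : ∀ z, dotProduct (star (e z)) ((V * Vᴴ) *ᵥ e z)
      = dotProduct (star (u z)) (u z) := by
    intro z
    have h := key 1 z
    rwa [Matrix.mul_one, Matrix.one_mulVec] at h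
  have hq0 : ∀ z, 0 ≤ (dotProduct (star (u z)) (u z)).re := by
    intro z
    simp only [dotProduct, Pi.star_apply, Complex.re_sum]
    refine Finset.sum_nonneg fun i _ => ?_
    rw [Complex.star_def, ← Complex.normSq_eq_conj_mul_self]
    simp [Complex.normSq_nonneg]

  have hdiff : ∀ z, (dotProduct (star (u z)) (Δ *ᵥ u z)).re
      = (dotProduct (star (e z)) ((V * ρA * Vᴴ).mulVec (e z))).re
        - (dA : ℝ)⁻¹ * (dotProduct (star (e z)) ((V * Vᴴ).mulVec (e z))).re := by
    intro z
    rw [hΔdef, Matrix.sub_mulVec, dotProduct_sub, Complex.sub_re, ← key ρA z, hqz z,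
      Matrix.smul_mulVec, Matrix.one_mulVec, dotProduct_smul, smul_eq_mul,
      show ((dA:ℂ))⁻¹ = (((dA:ℝ)⁻¹ : ℝ) : ℂ) by simp, Complex.re_ofReal_mul]
  have part1 : ∀ z, |(dotProduct (star (e z)) ((V * ρA * Vᴴ).mulVec (e z))).re
            - (dA : ℝ)⁻¹ * (dotProduct (star (e z)) ((V * Vᴴ).mulVec (e z))).re|
        ≤ 2 * δ * dA * ((dA : ℝ)⁻¹
            * (dotProduct (star (e z)) ((V * Vᴴ).mulVec (e z))).re) := by
    intro z
    rw [← hdiff z]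
    have h2 : (dotProduct (star (e z)) ((V * Vᴴ).mulVec (e z))).re
        = (dotProduct (star (u z)) (u z)).re := congrArg Complex.re (hqz z)
    rw [h2]
    refine le_trans (quad_bound hΔ (u z)) ?_
    refine le_trans (mul_le_mul_of_nonneg_right hsumev (hq0 z)) (le_of_eq ?_)
    field_simp
  refine ⟨part1, ?_⟩
  set F : Matrix (Fin M) (Fin M) ℂ := Matrix.of (fun z i => star (e z i)) with hF
  have hF1 : F * Fᴴ = 1 := by
    ext z w
    have h := he z w
    simp only [dotProduct, Pi.star_apply] at h
    simp only [Matrix.mul_apply, Matrix.conjTranspose_apply, hF, Matrix.of_apply,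
      Matrix.one_apply, star_star]
    exact h
  have hF2 : Fᴴ * F = 1 := mul_eq_one_comm.mp hF1
  have htr : ∀ z, dotProduct (star (e z)) ((V * Vᴴ).mulVec (e z))
      = (F * (V * Vᴴ) * Fᴴ) z z := by
    intro z
    simp only [Matrix.mul_apply, dotProduct, Matrix.mulVec, Matrix.conjTranspose_apply,
      hF, Matrix.of_apply, Pi.star_apply, star_star, dotProduct]
    simp only [Finset.mul_sum, Finset.sum_mul]
    rw [Finset.sum_comm]
    refine Finset.sum_congr rfl fun i _ => Finset.sum_congr rfl fun j _ => ?_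
    exact Finset.sum_congr rfl fun k _ => by ring
  have hsumQ : (∑ z, dotProduct (star (e z)) ((V * Vᴴ).mulVec (e z))) = (dA : ℂ) := by
    rw [Finset.sum_congr rfl fun z _ => htr z]
    have h0 : ∑ z, (F * (V * Vᴴ) * Fᴴ) z z = Matrix.trace (F * (V * Vᴴ) * Fᴴ) := rfl
    rw [h0, Matrix.trace_mul_cycle, hF2, Matrix.one_mul, Matrix.trace_mul_comm, hV,
      Matrix.trace_one]
    simp
  have hsumQre : ∑ z, (dotProduct (star (e z)) ((V * Vᴴ).mulVec (e z))).re
      = (dA : ℝ) := by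
    have h := congrArg Complex.re hsumQ
    rw [Complex.re_sum] at h
    simpa using h
  have hb : (∑ z, |(dotProduct (star (e z)) ((V * ρA * Vᴴ).mulVec (e z))).re
            - (dA : ℝ)⁻¹ * (dotProduct (star (e z)) ((V * Vᴴ).mulVec (e z))).re|)
      ≤ ∑ z, 2 * δ * dA * ((dA : ℝ)⁻¹
            * (dotProduct (star (e z)) ((V * Vᴴ).mulVec (e z))).re) :=
    Finset.sum_le_sum fun z _ => part1 z
  have hc : ∑ z, 2 * δ * (dA:ℝ) * ((dA : ℝ)⁻¹
            * (dotProduct (star (e z)) ((V * Vᴴ).mulVec (e z))).re)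
      = 2 * δ * (dA:ℝ) := by
    have h1 : ∀ z : Fin M, 2 * δ * (dA:ℝ) * ((dA : ℝ)⁻¹
            * (dotProduct (star (e z)) ((V * Vᴴ).mulVec (e z))).re)
        = (2 * δ * (dA:ℝ) * (dA:ℝ)⁻¹)
            * (dotProduct (star (e z)) ((V * Vᴴ).mulVec (e z))).re := fun z => by ring
    rw [Finset.sum_congr rfl fun z _ => h1 z, ← Finset.mul_sum, hsumQre]
    field_simp
  linarith
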